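/- For continuous nonnegative f, g on [0,1] and a partition 0 = t₁ < t₂ < ⋯ < tₙ = 1, define the discrete approximation H̃(f,g) = max{ max_{i : g(tᵢ) > f(tᵢ)} dist((tᵢ, g(tᵢ)), {(tⱼ, f(tⱼ))}ⱼ), max_{i : f(tᵢ) > g(tᵢ)} dist((tᵢ, f(tᵢ)), {(tⱼ, g(tⱼ))}ⱼ) } (with empty maxima equal to 0). Then as the mesh max_i |t_{i+1} − tᵢ| → 0, H̃(f,g) → ℍ(f,g). -/

import Mathlib

/-!
For a point above the graph of a continuous `f`, the intermediate value theorem shows that the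
nearest points of the hypograph `H_f` may be sought on the graph of `f`. When the mesh is small,
uniform continuity puts every graph point within `η` of a sample point `(tⱼ, f(tⱼ))`, so the
distance from a sample point of `g` lying above `f` to the samples of `f` exceeds its distance to
`H_f` (itself at most `ℍ(f,g)`) by at most `η`. Conversely, a point of `H_g` outside `H_f` is no
farther from `H_f` than the graph point of `g` above it, which is within `η` of a sample point of
`g`; hence `ℍ(f,g)` exceeds `H̃(f,g)` by at most `η` as well.
-/

open Set Metric Filter

def hypo (f : ℝ → ℝ) : Set (EuclideanSpace ℝ (Fin 2)) :=
  {p | p 0 ∈ Set.Icc (0:ℝ) 1 ∧ 0 ≤ p 1 ∧ p 1 ≤ f (p 0)}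

noncomputable def HH (f g : ℝ → ℝ) : ℝ := Metric.hausdorffDist (hypo f) (hypo g)

/-- The point `(a, b)` of the Euclidean plane. -/
noncomputable def pt (a b : ℝ) : EuclideanSpace ℝ (Fin 2) :=
  (WithLp.equiv 2 (Fin 2 → ℝ)).symm ![a, b]

/-- The discrete approximation `H̃(f,g)` associated with the partition points
`t 0, …, t n` (empty maxima are `0`, matching `sSup ∅ = 0` in `ℝ`). -/
noncomputable def Htilde (f g : ℝ → ℝ) (n : ℕ) (t : ℕ → ℝ) : ℝ :=
  max
    (sSup {d : ℝ | ∃ i ≤ n, f (t i) < g (t i) ∧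
      d = Metric.infDist (pt (t i) (g (t i))) {q | ∃ j ≤ n, q = pt (t j) (f (t j))}})
    (sSup {d : ℝ | ∃ i ≤ n, g (t i) < f (t i) ∧
      d = Metric.infDist (pt (t i) (f (t i))) {q | ∃ j ≤ n, q = pt (t j) (g (t j))}})

lemma pt_eta (p : EuclideanSpace ℝ (Fin 2)) : pt (p 0) (p 1) = p := by
  ext i
  fin_cases i <;> rfl

lemma dist_pt (a b c d : ℝ) :
    dist (pt a b) (pt c d) = √((a - c) ^ 2 + (b - d) ^ 2) := by
  rw [EuclideanSpace.dist_eq, Fin.sum_univ_two]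
  simp only [pt, WithLp.equiv_symm_apply, Matrix.cons_val_zero, Matrix.cons_val_one,
    Real.dist_eq, sq_abs]

lemma dist_pt_le_dist_pt {a b c d a' b' c' d' : ℝ} (h₁ : |a - c| ≤ |a' - c'|)
    (h₂ : |b - d| ≤ |b' - d'|) : dist (pt a b) (pt c d) ≤ dist (pt a' b') (pt c' d') := by
  rw [dist_pt, dist_pt]
  exact Real.sqrt_le_sqrt (add_le_add (sq_le_sq.mpr h₁) (sq_le_sq.mpr h₂))

lemma continuous_pt : Continuous fun p : ℝ × ℝ => pt p.1 p.2 := by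
  simp only [pt, WithLp.equiv_symm_apply]
  fun_prop

section Hypograph

variable {f g : ℝ → ℝ}

lemma hypo_nonempty (hf0 : ∀ x ∈ Icc (0:ℝ) 1, 0 ≤ f x) : (hypo f).Nonempty :=
  ⟨pt 0 0, left_mem_Icc.mpr zero_le_one, le_rfl, hf0 0 (left_mem_Icc.mpr zero_le_one)⟩

lemma isBounded_hypo (hfc : ContinuousOn f (Icc (0:ℝ) 1)) : Bornology.IsBounded (hypo f) := by
  obtain ⟨C, hC⟩ := isCompact_Icc.exists_bound_of_continuousOn hfc
  refine ((isCompact_Icc.prod (isCompact_Icc (b := C))).image continuous_pt).isBounded.subset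
    fun p ⟨hp0, hp1, hpf⟩ => ⟨(p 0, p 1), ⟨hp0, hp1, ?_⟩, pt_eta p⟩
  exact hpf.trans ((le_abs_self _).trans (hC _ hp0))

lemma infDist_hypo_le_HH (hf0 : ∀ x ∈ Icc (0:ℝ) 1, 0 ≤ f x) (hg0 : ∀ x ∈ Icc (0:ℝ) 1, 0 ≤ g x)
    (hfc : ContinuousOn f (Icc (0:ℝ) 1)) (hgc : ContinuousOn g (Icc (0:ℝ) 1))
    {p : EuclideanSpace ℝ (Fin 2)} (hp : p ∈ hypo g) : infDist p (hypo f) ≤ HH f g := by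
  rw [HH, hausdorffDist_comm]
  exact infDist_le_hausdorffDist_of_mem hp <| hausdorffEDist_ne_top_of_nonempty_of_bounded
    (hypo_nonempty hg0) (hypo_nonempty hf0) (isBounded_hypo hgc) (isBounded_hypo hfc)

lemma exists_graph_dist_le (hfc : ContinuousOn f (Icc (0:ℝ) 1)) {x₀ y₀ : ℝ}
    (hx₀ : x₀ ∈ Icc (0:ℝ) 1) (hy₀ : f x₀ ≤ y₀) {q : EuclideanSpace ℝ (Fin 2)} (hq : q ∈ hypo f) :
    ∃ x ∈ Icc (0:ℝ) 1, dist (pt x₀ y₀) (pt x (f x)) ≤ dist (pt x₀ y₀) q := by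
  obtain ⟨ha, hb, hbf⟩ := hq
  rw [← pt_eta q]
  rcases le_or_gt y₀ (f (q 0)) with hfa | hfa
  · -- `f` reaches the height `y₀` between `x₀` and `q 0`, horizontally no farther than `q`
    have hsub : uIcc x₀ (q 0) ⊆ Icc 0 1 := uIcc_subset_Icc hx₀ ha
    obtain ⟨x, hx, hfx⟩ := intermediate_value_uIcc (hfc.mono hsub) (mem_uIcc_of_le hy₀ hfa)
    refine ⟨x, hsub hx, dist_pt_le_dist_pt ?_ (by simp [hfx])⟩
    rw [abs_sub_comm, abs_sub_comm x₀]
    exact abs_sub_left_of_mem_uIcc hx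
  · refine ⟨q 0, ha, dist_pt_le_dist_pt le_rfl ?_⟩
    rw [abs_of_nonneg (by linarith), abs_of_nonneg (by linarith)]
    linarith

lemma infDist_pt_hypo_le_of_le {x y y' : ℝ} (hy : 0 ≤ y) (hyy' : y ≤ y') :
    infDist (pt x y) (hypo f) ≤ infDist (pt x y') (hypo f) := by
  rcases (hypo f).eq_empty_or_nonempty with hne | hne
  · simp [hne]
  refine (le_infDist hne).mpr fun q hq => ?_
  obtain ⟨ha, hb, hbf⟩ := id hq
  rw [← pt_eta q] at hq ⊢
  rcases le_or_gt (q 1) y with hby | hby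
  · refine (infDist_le_dist_of_mem hq).trans (dist_pt_le_dist_pt le_rfl ?_)
    rw [abs_of_nonneg (by linarith), abs_of_nonneg (by linarith)]
    linarith
  · have hmem : pt (q 0) y ∈ hypo f := ⟨ha, hy, hby.le.trans hbf⟩
    exact (infDist_le_dist_of_mem hmem).trans (dist_pt_le_dist_pt le_rfl (by simp))

end Hypograph

section Samples

variable (f g : ℝ → ℝ) (n : ℕ) (t : ℕ → ℝ)

def samples : Set (EuclideanSpace ℝ (Fin 2)) := {q | ∃ j ≤ n, q = pt (t j) (f (t j))}

noncomputable def gap : ℝ :=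
  sSup {d : ℝ | ∃ i ≤ n, f (t i) < g (t i) ∧ d = infDist (pt (t i) (g (t i))) (samples f n t)}

def IsGraphNet (η : ℝ) : Prop :=
  ∀ x ∈ Icc (0:ℝ) 1, ∃ j ≤ n, dist (pt x (f x)) (pt (t j) (f (t j))) ≤ η

lemma Htilde_eq_max_gap : Htilde f g n t = max (gap f g n t) (gap g f n t) := rfl

lemma samples_nonempty : (samples f n t).Nonempty := ⟨_, 0, n.zero_le, rfl⟩

variable {f g n t}

lemma samples_subset_hypo (hf0 : ∀ x ∈ Icc (0:ℝ) 1, 0 ≤ f x)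
    (ht : ∀ i ≤ n, t i ∈ Icc (0:ℝ) 1) : samples f n t ⊆ hypo f := by
  rintro q ⟨j, hj, rfl⟩
  exact ⟨ht j hj, hf0 _ (ht j hj), le_rfl⟩

lemma gap_nonneg : 0 ≤ gap f g n t :=
  Real.sSup_nonneg fun _ ⟨_, _, _, hd⟩ => hd ▸ infDist_nonneg

lemma infDist_samples_le_gap {i : ℕ} (hi : i ≤ n) (hfg : f (t i) < g (t i)) :
    infDist (pt (t i) (g (t i))) (samples f n t) ≤ gap f g n t := by
  have hfin := (finite_Iic n).image fun i => infDist (pt (t i) (g (t i))) (samples f n t)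
  refine le_csSup (hfin.bddAbove.mono ?_) ⟨i, hi, hfg, rfl⟩
  rintro d ⟨i, hi, -, rfl⟩
  exact ⟨i, hi, rfl⟩

lemma IsGraphNet.nonneg {η : ℝ} (hnet : IsGraphNet f n t η) : 0 ≤ η := by
  obtain ⟨j, -, hj⟩ := hnet 0 (left_mem_Icc.mpr zero_le_one)
  exact dist_nonneg.trans hj

lemma infDist_samples_le_infDist_hypo_add (hne : (hypo f).Nonempty)
    (hfc : ContinuousOn f (Icc (0:ℝ) 1)) {η : ℝ} (hnet : IsGraphNet f n t η) {x₀ y₀ : ℝ}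
    (hx₀ : x₀ ∈ Icc (0:ℝ) 1) (hy₀ : f x₀ ≤ y₀) :
    infDist (pt x₀ y₀) (samples f n t) ≤ infDist (pt x₀ y₀) (hypo f) + η := by
  rw [← sub_le_iff_le_add, le_infDist hne]
  intro q hq
  obtain ⟨x, hx, hxq⟩ := exists_graph_dist_le hfc hx₀ hy₀ hq
  obtain ⟨j, hj, hxj⟩ := hnet x hx
  calc infDist (pt x₀ y₀) (samples f n t) - η
      ≤ dist (pt x₀ y₀) (pt (t j) (f (t j))) - η := by
        gcongr
        exact infDist_le_dist_of_mem ⟨j, hj, rfl⟩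
    _ ≤ dist (pt x₀ y₀) (pt x (f x)) := by
        linarith [dist_triangle (pt x₀ y₀) (pt x (f x)) (pt (t j) (f (t j)))]
    _ ≤ dist (pt x₀ y₀) q := hxq

lemma gap_le_HH_add (hf0 : ∀ x ∈ Icc (0:ℝ) 1, 0 ≤ f x) (hg0 : ∀ x ∈ Icc (0:ℝ) 1, 0 ≤ g x)
    (hfc : ContinuousOn f (Icc (0:ℝ) 1)) (hgc : ContinuousOn g (Icc (0:ℝ) 1))
    (ht : ∀ i ≤ n, t i ∈ Icc (0:ℝ) 1) {η : ℝ} (hnet : IsGraphNet f n t η) :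
    gap f g n t ≤ HH f g + η := by
  refine Real.sSup_le ?_ (add_nonneg hausdorffDist_nonneg hnet.nonneg)
  rintro d ⟨i, hi, hfg, rfl⟩
  have hp : pt (t i) (g (t i)) ∈ hypo g := ⟨ht i hi, hg0 _ (ht i hi), le_rfl⟩
  calc infDist (pt (t i) (g (t i))) (samples f n t)
      ≤ infDist (pt (t i) (g (t i))) (hypo f) + η :=
        infDist_samples_le_infDist_hypo_add (hypo_nonempty hf0) hfc hnet (ht i hi) hfg.le
    _ ≤ HH f g + η := by gcongr; exact infDist_hypo_le_HH hf0 hg0 hfc hgc hp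

lemma infDist_hypo_le_gap_add (hf0 : ∀ x ∈ Icc (0:ℝ) 1, 0 ≤ f x)
    (hg0 : ∀ x ∈ Icc (0:ℝ) 1, 0 ≤ g x) (ht : ∀ i ≤ n, t i ∈ Icc (0:ℝ) 1) {η : ℝ}
    (hnet : IsGraphNet g n t η) {p : EuclideanSpace ℝ (Fin 2)} (hp : p ∈ hypo g) :
    infDist p (hypo f) ≤ gap f g n t + η := by
  obtain ⟨hx, hy0, hyg⟩ := hp
  obtain ⟨i, hi, hxi⟩ := hnet _ hx
  have hsample : infDist (pt (t i) (g (t i))) (hypo f) ≤ gap f g n t := by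
    rcases le_or_gt (g (t i)) (f (t i)) with hgf | hfg
    · have hmem : pt (t i) (g (t i)) ∈ hypo f := ⟨ht i hi, hg0 _ (ht i hi), hgf⟩
      exact (infDist_zero_of_mem hmem).trans_le gap_nonneg
    · exact (infDist_le_infDist_of_subset (samples_subset_hypo hf0 ht)
        (samples_nonempty f n t)).trans (infDist_samples_le_gap hi hfg)
  calc infDist p (hypo f)
      = infDist (pt (p 0) (p 1)) (hypo f) := by rw [pt_eta]
    _ ≤ infDist (pt (p 0) (g (p 0))) (hypo f) := infDist_pt_hypo_le_of_le hy0 hyg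
    _ ≤ infDist (pt (t i) (g (t i))) (hypo f) + η :=
        infDist_le_infDist_add_dist.trans (by gcongr)
    _ ≤ gap f g n t + η := by gcongr

lemma Htilde_le_HH_add (hf0 : ∀ x ∈ Icc (0:ℝ) 1, 0 ≤ f x) (hg0 : ∀ x ∈ Icc (0:ℝ) 1, 0 ≤ g x)
    (hfc : ContinuousOn f (Icc (0:ℝ) 1)) (hgc : ContinuousOn g (Icc (0:ℝ) 1))
    (ht : ∀ i ≤ n, t i ∈ Icc (0:ℝ) 1) {η : ℝ} (hf : IsGraphNet f n t η)
    (hg : IsGraphNet g n t η) : Htilde f g n t ≤ HH f g + η := by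
  rw [Htilde_eq_max_gap]
  refine max_le (gap_le_HH_add hf0 hg0 hfc hgc ht hf) ?_
  rw [HH, hausdorffDist_comm]
  exact gap_le_HH_add hg0 hf0 hgc hfc ht hg

lemma HH_le_Htilde_add (hf0 : ∀ x ∈ Icc (0:ℝ) 1, 0 ≤ f x) (hg0 : ∀ x ∈ Icc (0:ℝ) 1, 0 ≤ g x)
    (ht : ∀ i ≤ n, t i ∈ Icc (0:ℝ) 1) {η : ℝ} (hf : IsGraphNet f n t η)
    (hg : IsGraphNet g n t η) : HH f g ≤ Htilde f g n t + η := by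
  rw [Htilde_eq_max_gap]
  refine hausdorffDist_le_of_infDist (add_nonneg (gap_nonneg.trans (le_max_left _ _)) hf.nonneg)
    (fun p hp => ?_) (fun p hp => ?_)
  · exact (infDist_hypo_le_gap_add hg0 hf0 ht hf hp).trans (by gcongr; exact le_max_right _ _)
  · exact (infDist_hypo_le_gap_add hf0 hg0 ht hg hp).trans (by gcongr; exact le_max_left _ _)

end Samples

section Partition

variable {n : ℕ} {t : ℕ → ℝ}

lemma mem_Icc_of_partition (h0 : t 0 = 0) (hn : t n = 1) (hmono : ∀ i < n, t i < t (i + 1))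
    {i : ℕ} (hi : i ≤ n) : t i ∈ Icc (0:ℝ) 1 := by
  have hmono' : Monotone fun i => t (min i n) := monotone_nat_of_le_succ fun i => by
    rcases lt_or_ge i n with h | h
    · rw [min_eq_left h.le, min_eq_left h]
      exact (hmono i h).le
    · rw [min_eq_right h, min_eq_right (h.trans i.le_succ)]
  have h₀ := hmono' i.zero_le
  have h₁ := hmono' hi
  simp only [n.zero_le, min_eq_left, hi, min_self] at h₀ h₁
  exact ⟨h0 ▸ h₀, hn ▸ h₁⟩

lemma exists_abs_sub_lt_of_mesh_lt {δ : ℝ} (hδ : 0 < δ) (h0 : t 0 = 0) (hn : t n = 1)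
    (hmesh : ∀ i < n, t (i + 1) - t i < δ) {x : ℝ} (hx : x ∈ Icc (0:ℝ) 1) :
    ∃ i ≤ n, |x - t i| < δ := by
  classical
  have hex : ∃ i, x ≤ t i := ⟨n, hn ▸ hx.2⟩
  have hspec := Nat.find_spec hex
  have hle : Nat.find hex ≤ n := Nat.find_min' hex (hn ▸ hx.2)
  refine ⟨Nat.find hex, hle, ?_⟩
  rcases h : Nat.find hex with _ | k
  · rw [h, h0] at hspec
    rw [h0, le_antisymm hspec hx.1]
    simpa using hδ
  · rw [h] at hspec hle
    have hlt : t k < x := not_le.mp (Nat.find_min hex (h ▸ k.lt_succ_self))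
    rw [abs_sub_comm, abs_of_nonneg (sub_nonneg.mpr hspec)]
    linarith [hmesh k hle]

end Partition

lemma exists_isGraphNet {f : ℝ → ℝ} (hfc : ContinuousOn f (Icc (0:ℝ) 1)) {η : ℝ} (hη : 0 < η) :
    ∃ δ > 0, ∀ (n : ℕ) (t : ℕ → ℝ), (∀ i ≤ n, t i ∈ Icc (0:ℝ) 1) →
      (∀ x ∈ Icc (0:ℝ) 1, ∃ i ≤ n, |x - t i| < δ) → IsGraphNet f n t η := by
  have hgraph : UniformContinuousOn (fun x => pt x (f x)) (Icc 0 1) :=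
    isCompact_Icc.uniformContinuousOn_of_continuous
      (continuous_pt.comp_continuousOn (continuousOn_id.prodMk hfc))
  obtain ⟨δ, hδ, hδη⟩ := Metric.uniformContinuousOn_iff.mp hgraph η hη
  refine ⟨δ, hδ, fun n t ht hdense x hx => ?_⟩
  obtain ⟨i, hi, hxi⟩ := hdense x hx
  exact ⟨i, hi, (hδη x hx (t i) (ht i hi) (by rwa [Real.dist_eq])).le⟩

/-- As the mesh of the partition tends to `0`, the discrete approximation
`H̃(f,g)` converges to `ℍ(f,g)`, for continuous nonnegative `f, g`. -/
theorem stmt_17 (f g : ℝ → ℝ)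
    (hf0 : ∀ x ∈ Set.Icc (0:ℝ) 1, 0 ≤ f x)
    (hg0 : ∀ x ∈ Set.Icc (0:ℝ) 1, 0 ≤ g x)
    (hfc : ContinuousOn f (Set.Icc (0:ℝ) 1))
    (hgc : ContinuousOn g (Set.Icc (0:ℝ) 1)) :
    ∀ ε : ℝ, 0 < ε → ∃ δ : ℝ, 0 < δ ∧
      ∀ (n : ℕ) (t : ℕ → ℝ), 0 < n → t 0 = 0 → t n = 1 →
        (∀ i < n, t i < t (i+1)) → (∀ i < n, t (i+1) - t i < δ) →
        |Htilde f g n t - HH f g| < ε := by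
  intro ε hε
  obtain ⟨δf, hδf, hnetf⟩ := exists_isGraphNet hfc (half_pos hε)
  obtain ⟨δg, hδg, hnetg⟩ := exists_isGraphNet hgc (half_pos hε)
  refine ⟨min δf δg, lt_min hδf hδg, fun n t _ h0 hn hmono hmesh => ?_⟩
  have ht : ∀ i ≤ n, t i ∈ Icc (0:ℝ) 1 := fun i hi => mem_Icc_of_partition h0 hn hmono hi
  have hf : IsGraphNet f n t (ε / 2) := hnetf n t ht fun x hx =>
    exists_abs_sub_lt_of_mesh_lt hδf h0 hn (fun i hi => (hmesh i hi).trans_le (min_le_left _ _)) hx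
  have hg : IsGraphNet g n t (ε / 2) := hnetg n t ht fun x hx =>
    exists_abs_sub_lt_of_mesh_lt hδg h0 hn (fun i hi => (hmesh i hi).trans_le (min_le_right _ _)) hx
  have hupper := Htilde_le_HH_add hf0 hg0 hfc hgc ht hf hg
  have hlower := HH_le_Htilde_add hf0 hg0 ht hf hg
  rw [abs_sub_lt_iff]
  constructor <;> linarith
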